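/- arXiv:1902.09783 — 2 statements merged into one kernel-verified Lean document; each statement's English description precedes it below -/
import Mathlib

section
/- Let {P_j = (X_j, Y_j, R_j, S_j, T_j) : j ∈ J} be a family of Ω-polarities and Σ_J P_j their direct sum. Then all sections of S_J and of T_J are stable, so Σ_J P_j is an Ω-polarity; and the map θ sending a stable subset A of Σ_J X_j to the family θ(A) = (j ↦ {x ∈ X_j : (x, j) ∈ A}) is a bijection from the stable subsets of Σ_J X_j (in Σ_J P_j) onto the product ∏_{j∈J} P_j⁺ of the stable set lattices, with both θ and θ⁻¹ inclusion-preserving (so (Σ_J P_j)⁺ is isomorphic to ∏_J P_j⁺ as complete lattices), and θ commutes with the induced operators: θ(f_{S_J}(A₀,…,A_{n−1}))(j) = f_{S_j}(θ(A₀)(j),…,θ(A_{n−1})(j)) and θ(g_{T_J}(A₀,…,A_{m−1}))(j) = g_{T_j}(θ(A₀)(j),…,θ(A_{m−1})(j)) for every j ∈ J. -/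
/-- The right polar `ρ_R A = {y ∈ Y : ∀ x ∈ A, x R y}`. -/
def rpolar {X Y : Type*} (R : X → Y → Prop) (A : Set X) : Set Y := {y | ∀ x ∈ A, R x y}

/-- The left polar `λ_R B = {x ∈ X : ∀ y ∈ B, x R y}`. -/
def lpolar {X Y : Type*} (R : X → Y → Prop) (B : Set Y) : Set X := {x | ∀ y ∈ B, R x y}

/-- `A ⊆ X` is stable if `A = λ_R (ρ_R A)`. -/
def StableX {X Y : Type*} (R : X → Y → Prop) (A : Set X) : Prop := A = lpolar R (rpolar R A)

/-- `B ⊆ Y` is stable if `B = ρ_R (λ_R B)`. -/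
def StableY {X Y : Type*} (R : X → Y → Prop) (B : Set Y) : Prop := B = rpolar R (lpolar R B)

/-- The quasi-order `≤₁` on `X`. -/
def le1 {X Y : Type*} (R : X → Y → Prop) (x x' : X) : Prop := rpolar R {x} ⊆ rpolar R {x'}

/-- The quasi-order `≤₂` on `Y`. -/
def le2 {X Y : Type*} (R : X → Y → Prop) (y y' : Y) : Prop := lpolar R {y} ⊆ lpolar R {y'}

/-- The operator `f_S` induced on stable sets by `S ⊆ Xⁿ × Y`. -/
def fS {X Y : Type*} {n : ℕ} (R : X → Y → Prop) (S : (Fin n → X) → Y → Prop)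
    (A : Fin n → Set X) : Set X :=
  lpolar R {y | ∀ xs : Fin n → X, (∀ i, xs i ∈ A i) → S xs y}

/-- The dual operator `g_T` induced on stable sets by `T ⊆ X × Yᵐ`. -/
def gT {X Y : Type*} {m : ℕ} (R : X → Y → Prop) (T : X → (Fin m → Y) → Prop)
    (A : Fin m → Set X) : Set X :=
  {x | ∀ ys : Fin m → Y, (∀ i, ys i ∈ rpolar R (A i)) → T x ys}

/-- All sections of `S ⊆ Xⁿ × Y` are stable. -/
def SSectionsStable {X Y : Type*} {n : ℕ} (R : X → Y → Prop)
    (S : (Fin n → X) → Y → Prop) : Prop :=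
  (∀ xs : Fin n → X, StableY R {y | S xs y}) ∧
  (∀ (xs : Fin n → X) (i : Fin n) (y : Y), StableX R {x' | S (Function.update xs i x') y})

/-- All sections of `T ⊆ X × Yᵐ` are stable. -/
def TSectionsStable {X Y : Type*} {m : ℕ} (R : X → Y → Prop)
    (T : X → (Fin m → Y) → Prop) : Prop :=
  (∀ ys : Fin m → Y, StableX R {x | T x ys}) ∧
  (∀ (x : X) (ys : Fin m → Y) (i : Fin m), StableY R {y' | T x (Function.update ys i y')})

/-- The polarity relation of the direct sum: `(x, j) R_J (y, k)` iff `j ≠ k`, or `j = k`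
and `x R_k y`. -/
def sumR {J : Type*} {X Y : J → Type*} (R : ∀ j, X j → Y j → Prop) :
    (Σ j, X j) → (Σ j, Y j) → Prop :=
  fun p q => ∀ h : q.1 = p.1, R p.1 p.2 (cast (congrArg Y h) q.2)

/-- The `S`-relation of the direct sum: `((x₀, j₀), …, (x_{n−1}, j_{n−1})) S_J (y, k)` iff
some `jᵢ ≠ k`, or all `jᵢ = k` and `(x₀, …, x_{n−1}) S_k y`. -/
def sumS {J : Type*} {X Y : J → Type*} {n : ℕ}
    (S : ∀ j, (Fin n → X j) → Y j → Prop) :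
    (Fin n → Σ j, X j) → (Σ j, Y j) → Prop :=
  fun xs q => ∀ h : ∀ i, (xs i).1 = q.1,
    S q.1 (fun i => cast (congrArg X (h i)) (xs i).2) q.2

/-- The `T`-relation of the direct sum: `(x, k) T_J ((y₀, j₀), …, (y_{m−1}, j_{m−1}))` iff
some `jᵢ ≠ k`, or all `jᵢ = k` and `x T_k (y₀, …, y_{m−1})`. -/
def sumT {J : Type*} {X Y : J → Type*} {m : ℕ}
    (T : ∀ j, X j → (Fin m → Y j) → Prop) :
    (Σ j, X j) → (Fin m → Σ j, Y j) → Prop :=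
  fun p ys => ∀ h : ∀ i, (ys i).1 = p.1,
    T p.1 p.2 (fun i => cast (congrArg Y (h i)) (ys i).2)

/-- For a subset `A` of `Σ_J X_j`, its `j`-th component `{x ∈ X_j : (x, j) ∈ A}`. -/
def sumTheta {J : Type*} {X : J → Type*} (A : Set (Σ j, X j)) (j : J) : Set (X j) :=
  {x | (⟨j, x⟩ : Σ j, X j) ∈ A}

/-!
The direct sum is built so that points of different summands are always related; hence every
polar, closure and section of `Σ_J P_j` splits into its components, the component at `j` is the
corresponding object of `P_j`, and components on which the defining condition cannot hold are
the whole summand, which is trivially stable. The `T`-sections are the `S`-sections of the dual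
polarity `(Y, X, Rᵒᵖ)`, and the sum of the duals is the dual of the sum.
-/

section Polarity

variable {X Y : Type*}

lemma stableX_univ (R : X → Y → Prop) : StableX R (Set.univ : Set X) :=
  Set.Subset.antisymm (fun _ _ _ hy => hy _ trivial) (Set.subset_univ _)

lemma stableY_univ (R : X → Y → Prop) : StableY R (Set.univ : Set Y) :=
  stableX_univ (flip R)

lemma stableX_of_isEmpty [IsEmpty X] (R : X → Y → Prop) (A : Set X) : StableX R A :=
  Subsingleton.elim _ _

lemma stableY_iff_stableX_flip (R : X → Y → Prop) (B : Set Y) :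
    StableY R B ↔ StableX (flip R) B :=
  Iff.rfl

lemma tSectionsStable_iff_sSectionsStable_flip {m : ℕ} (R : X → Y → Prop)
    (T : X → (Fin m → Y) → Prop) :
    TSectionsStable R T ↔ SSectionsStable (flip R) (fun ys x => T x ys) :=
  ⟨fun ⟨h₁, h₂⟩ => ⟨h₁, fun ys i x => h₂ x ys i⟩, fun ⟨h₁, h₂⟩ => ⟨h₁, fun x ys i => h₂ ys i x⟩⟩

end Polarity

section DirectSum

variable {J : Type*} {X Y : J → Type*}

lemma mem_sumTheta {A : Set (Σ j, X j)} {j : J} {x : X j} :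
    x ∈ sumTheta A j ↔ (⟨j, x⟩ : Σ j, X j) ∈ A :=
  Iff.rfl

lemma sumTheta_injective : Function.Injective (sumTheta (X := X)) := fun _ _ h =>
  Set.ext fun ⟨j, x⟩ => Set.ext_iff.mp (congrFun h j) x

lemma subset_iff_forall_sumTheta_subset {A B : Set (Σ j, X j)} :
    A ⊆ B ↔ ∀ j, sumTheta A j ⊆ sumTheta B j :=
  ⟨fun h _ _ hx => h hx, fun h p hp => h p.1 hp⟩

lemma sumTheta_univ_sigma (B : ∀ j, Set (X j)) (j : J) : sumTheta (Set.univ.sigma B) j = B j :=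
  Set.mk_preimage_sigma (Set.mem_univ j)

lemma sumTheta_setOf_eq_univ {P : (Σ j, X j) → Prop} {j : J} (h : ∀ x, P ⟨j, x⟩) :
    sumTheta {p | P p} j = Set.univ :=
  Set.eq_univ_of_forall h

lemma exists_sigmaMk_comp_eq {ι : Type*} {xs : ι → Σ j, X j} {k : J} (h : ∀ i, (xs i).1 = k) :
    ∃ xs' : ι → X k, Sigma.mk k ∘ xs' = xs :=
  ⟨fun i => cast (congrArg X (h i)) (xs i).2,
    funext fun i => Sigma.ext (h i).symm (cast_heq _ _)⟩

lemma sumR_flip (R : ∀ j, X j → Y j → Prop) :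
    flip (sumR R) = sumR fun j => flip (R j) := by
  funext ⟨k, y⟩ ⟨j, x⟩
  exact propext ⟨fun h e => by cases e; exact h rfl, fun h e => by cases e; exact h rfl⟩

lemma sumTheta_lpolar (R : ∀ j, X j → Y j → Prop) (B : Set (Σ j, Y j)) (j : J) :
    sumTheta (lpolar (sumR R) B) j = lpolar (R j) (sumTheta B j) :=
  Set.ext fun _ =>
    ⟨fun h y hy => h ⟨j, y⟩ hy rfl, fun h ⟨_, y⟩ hy e => by cases e; exact h y hy⟩

lemma sumTheta_rpolar (R : ∀ j, X j → Y j → Prop) (A : Set (Σ j, X j)) (j : J) :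
    sumTheta (rpolar (sumR R) A) j = rpolar (R j) (sumTheta A j) :=
  Set.ext fun _ =>
    ⟨fun h x hx => h ⟨j, x⟩ hx rfl, fun h ⟨_, x⟩ hx e => by cases e; exact h x hx⟩

lemma sigmaMk_mem_rpolar_sumR_iff (R : ∀ j, X j → Y j → Prop) {A : Set (Σ j, X j)} {j : J}
    {y : Y j} : (⟨j, y⟩ : Σ j, Y j) ∈ rpolar (sumR R) A ↔ y ∈ rpolar (R j) (sumTheta A j) :=
  Set.ext_iff.mp (sumTheta_rpolar R A j) y

lemma stableX_sumR_iff (R : ∀ j, X j → Y j → Prop) (A : Set (Σ j, X j)) :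
    StableX (sumR R) A ↔ ∀ j, StableX (R j) (sumTheta A j) := by
  simp only [StableX, ← sumTheta_rpolar, ← sumTheta_lpolar, ← funext_iff]
  exact sumTheta_injective.eq_iff.symm

lemma stableY_sumR_iff (R : ∀ j, X j → Y j → Prop) (B : Set (Σ j, Y j)) :
    StableY (sumR R) B ↔ ∀ j, StableY (R j) (sumTheta B j) := by
  rw [stableY_iff_stableX_flip, sumR_flip, stableX_sumR_iff]
  rfl

variable {R : ∀ j, X j → Y j → Prop} {n : ℕ} (S : ∀ j, (Fin n → X j) → Y j → Prop)

lemma sumS_sigmaMk_comp_iff {k : J} (xs : Fin n → X k) (y : Y k) :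
    sumS S (Sigma.mk k ∘ xs) ⟨k, y⟩ ↔ S k xs y :=
  ⟨fun h => h fun _ => rfl, fun h _ => h⟩

lemma sumS_of_fst_ne {xs : Fin n → Σ j, X j} {q : Σ j, Y j} {i : Fin n} (h : (xs i).1 ≠ q.1) :
    sumS S xs q :=
  fun h' => absurd (h' i) h

lemma stableY_sumTheta_setOf_sumS (hS : ∀ j, SSectionsStable (R j) (S j))
    (xs : Fin n → Σ j, X j) (k : J) : StableY (R k) (sumTheta {q | sumS S xs q} k) := by
  by_cases H : ∀ i, (xs i).1 = k
  · obtain ⟨xs', rfl⟩ := exists_sigmaMk_comp_eq H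
    have e : sumTheta {q | sumS S (Sigma.mk k ∘ xs') q} k = {y | S k xs' y} :=
      Set.ext fun y => sumS_sigmaMk_comp_iff S xs' y
    exact e ▸ (hS k).1 xs'
  · obtain ⟨i, hi⟩ := not_forall.mp H
    rw [sumTheta_setOf_eq_univ fun _ => sumS_of_fst_ne S hi]
    exact stableY_univ (R k)

lemma stableX_sumTheta_setOf_sumS_update_of_fst_eq (hS : ∀ j, SSectionsStable (R j) (S j))
    {xs : Fin n → Σ j, X j} {i : Fin n} {k : J} (hi : (xs i).1 = k) (y : Y k) :
    StableX (R k) (sumTheta {p | sumS S (Function.update xs i p) ⟨k, y⟩} k) := by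
  by_cases H : ∀ i', (xs i').1 = k
  · obtain ⟨xs', rfl⟩ := exists_sigmaMk_comp_eq H
    have e : sumTheta {p | sumS S (Function.update (Sigma.mk k ∘ xs') i p) ⟨k, y⟩} k =
        {x | S k (Function.update xs' i x) y} := by
      ext x
      rw [mem_sumTheta, Set.mem_ofPred_eq, ← Function.comp_update, sumS_sigmaMk_comp_iff]
      rfl
    exact e ▸ (hS k).2 xs' i y
  · obtain ⟨i', hi'⟩ := not_forall.mp H
    have hne : i' ≠ i := by rintro rfl; exact hi' hi
    have e : sumTheta {p | sumS S (Function.update xs i p) ⟨k, y⟩} k = Set.univ :=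
      sumTheta_setOf_eq_univ fun _ =>
        sumS_of_fst_ne S (i := i') (by rwa [Function.update_of_ne hne])
    exact e ▸ stableX_univ (R k)

lemma stableX_sumTheta_setOf_sumS_update (hS : ∀ j, SSectionsStable (R j) (S j))
    (xs : Fin n → Σ j, X j) (i : Fin n) (q : Σ j, Y j) (k : J) :
    StableX (R k) (sumTheta {p | sumS S (Function.update xs i p) q} k) := by
  obtain ⟨j, y⟩ := q
  by_cases hkj : k = j
  swap
  · have e : sumTheta {p | sumS S (Function.update xs i p) ⟨j, y⟩} k = Set.univ :=
      sumTheta_setOf_eq_univ fun _ => sumS_of_fst_ne S (i := i) (by rwa [Function.update_self])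
    exact e ▸ stableX_univ (R k)
  subst hkj
  cases isEmpty_or_nonempty (X k) with
  | inl _ => exact stableX_of_isEmpty _ _
  | inr hX =>
    -- the `i`-th entry of `xs` is irrelevant, so it may be moved into the summand `k`
    obtain ⟨x₀⟩ := hX
    have e : {p | sumS S (Function.update xs i p) ⟨k, y⟩} =
        {p | sumS S (Function.update (Function.update xs i ⟨k, x₀⟩) i p) ⟨k, y⟩} := by
      simp only [Function.update_idem]
    rw [e]
    exact stableX_sumTheta_setOf_sumS_update_of_fst_eq S hS
      (congrArg Sigma.fst (Function.update_self i ⟨k, x₀⟩ xs)) y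

theorem sSectionsStable_sumS (hS : ∀ j, SSectionsStable (R j) (S j)) :
    SSectionsStable (sumR R) (sumS S) :=
  ⟨fun xs => (stableY_sumR_iff R _).mpr (stableY_sumTheta_setOf_sumS S hS xs),
    fun xs i q => (stableX_sumR_iff R _).mpr (stableX_sumTheta_setOf_sumS_update S hS xs i q)⟩

theorem tSectionsStable_sumT {m : ℕ} {T : ∀ j, X j → (Fin m → Y j) → Prop}
    (hT : ∀ j, TSectionsStable (R j) (T j)) : TSectionsStable (sumR R) (sumT T) := by
  rw [tSectionsStable_iff_sSectionsStable_flip, sumR_flip]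
  exact sSectionsStable_sumS (fun j ys x => T j x ys)
    fun j => (tSectionsStable_iff_sSectionsStable_flip _ _).mp (hT j)

variable (R)

lemma sumTheta_fS (As : Fin n → Set (Σ j, X j)) (j : J) :
    sumTheta (fS (sumR R) (sumS S) As) j = fS (R j) (S j) fun i => sumTheta (As i) j := by
  rw [fS, sumTheta_lpolar]
  congr 1
  ext y
  refine ⟨fun hy xs hxs => hy (Sigma.mk j ∘ xs) hxs fun _ => rfl, fun hy xs hxs h => ?_⟩
  obtain ⟨xs', rfl⟩ := exists_sigmaMk_comp_eq h
  exact hy xs' hxs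

lemma sumTheta_gT {m : ℕ} (T : ∀ j, X j → (Fin m → Y j) → Prop) (As : Fin m → Set (Σ j, X j))
    (j : J) :
    sumTheta (gT (sumR R) (sumT T) As) j = gT (R j) (T j) fun i => sumTheta (As i) j := by
  ext x
  refine ⟨fun hx ys hys => hx (Sigma.mk j ∘ ys) (fun i => ?_) fun _ => rfl,
    fun hx ys hys h => ?_⟩
  · exact (sigmaMk_mem_rpolar_sumR_iff R).mpr (hys i)
  · obtain ⟨ys', rfl⟩ := exists_sigmaMk_comp_eq h
    exact hx ys' fun i => (sigmaMk_mem_rpolar_sumR_iff R).mp (hys i)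

end DirectSum

/-- The direct sum of a family of Ω-polarities is an Ω-polarity, and its stable set
lattice is isomorphic (as a complete lattice with operators) to the direct product of the
stable set lattices of the summands, via `θ(A)(j) = {x : (x, j) ∈ A}`. -/
theorem stmt18 {J : Type*} {X Y : J → Type*} {n m : ℕ}
    (R : ∀ j, X j → Y j → Prop)
    (S : ∀ j, (Fin n → X j) → Y j → Prop)
    (T : ∀ j, X j → (Fin m → Y j) → Prop)
    (hS : ∀ j, SSectionsStable (R j) (S j))
    (hT : ∀ j, TSectionsStable (R j) (T j)) :
    -- the direct sum is an Ω-polarity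
    SSectionsStable (sumR R) (sumS S) ∧
    TSectionsStable (sumR R) (sumT T) ∧
    -- `θ` maps stable sets to families of stable sets
    (∀ A : Set (Σ j, X j), StableX (sumR R) A →
      ∀ j, StableX (R j) (sumTheta A j)) ∧
    -- `θ` is injective on stable sets
    (∀ A B : Set (Σ j, X j), StableX (sumR R) A → StableX (sumR R) B →
      (∀ j, sumTheta A j = sumTheta B j) → A = B) ∧
    -- `θ` is surjective onto families of stable sets
    (∀ B : ∀ j, Set (X j), (∀ j, StableX (R j) (B j)) →
      ∃ A : Set (Σ j, X j), StableX (sumR R) A ∧ ∀ j, sumTheta A j = B j) ∧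
    -- `θ` and its inverse preserve inclusion
    (∀ A B : Set (Σ j, X j), StableX (sumR R) A → StableX (sumR R) B →
      (A ⊆ B ↔ ∀ j, sumTheta A j ⊆ sumTheta B j)) ∧
    -- `θ` commutes with the induced operators
    (∀ As : Fin n → Set (Σ j, X j), (∀ i, StableX (sumR R) (As i)) →
      ∀ j, sumTheta (fS (sumR R) (sumS S) As) j =
        fS (R j) (S j) (fun i => sumTheta (As i) j)) ∧
    (∀ As : Fin m → Set (Σ j, X j), (∀ i, StableX (sumR R) (As i)) →
      ∀ j, sumTheta (gT (sumR R) (sumT T) As) j =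
        gT (R j) (T j) (fun i => sumTheta (As i) j)) := by
  refine ⟨sSectionsStable_sumS S hS, tSectionsStable_sumT hT,
    fun A hA => (stableX_sumR_iff R A).mp hA,
    fun A B _ _ h => sumTheta_injective (funext h),
    fun B hB => ⟨Set.univ.sigma B, ?_, sumTheta_univ_sigma B⟩,
    fun A B _ _ => subset_iff_forall_sumTheta_subset,
    fun As _ => sumTheta_fS R S As,
    fun As _ => sumTheta_gT R T As⟩
  rw [stableX_sumR_iff]
  simpa only [sumTheta_univ_sigma] using hB
end

section
/- Let L be a bounded lattice with canonical polarity (𝓕_L, 𝓘_L, ⋔). Call a filter F ∈ 𝓕_L D-maximal (for an ideal D ∈ 𝓘_L) if F is maximal with respect to inclusion among filters disjoint from D, and i-maximal if it is D-maximal for some ideal D. Let P = (X, Y, R) be a polarity and (α, β) a bounded morphism of polarities from P to (𝓕_L, 𝓘_L, ⋔) such that every i-maximal filter of L lies in the image of α : X → 𝓕_L. Then the map A ↦ α⁻¹A, from stable subsets of 𝓕_L (in the canonical polarity) to subsets of X, is injective. -/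
/-- A bounded morphism between plain polarities. -/
structure IsPolarityMorphism {X Y X' Y' : Type*} (R : X → Y → Prop) (R' : X' → Y' → Prop)
    (α : X → X') (β : Y → Y') : Prop where
  mono1 : ∀ ⦃x z : X⦄, le1 R x z → le1 R' (α x) (α z)
  mono2 : ∀ ⦃y w : Y⦄, le2 R y w → le2 R' (β y) (β w)
  backR : ∀ ⦃x : X⦄ ⦃y : Y⦄, R' (α x) (β y) → R x y
  forthR1 : ∀ ⦃x' : X'⦄ ⦃y : Y⦄, (∀ x : X, le1 R' x' (α x) → R x y) → R' x' (β y)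
  forthR2 : ∀ ⦃x : X⦄ ⦃y' : Y'⦄, (∀ y : Y, le2 R' y' (β y) → R x y) → R' (α x) y'

/-- A bounded morphism between Ω-polarities. -/
structure IsBddMorphism {X Y X' Y' : Type*} {n m : ℕ}
    (R : X → Y → Prop) (S : (Fin n → X) → Y → Prop) (T : X → (Fin m → Y) → Prop)
    (R' : X' → Y' → Prop) (S' : (Fin n → X') → Y' → Prop) (T' : X' → (Fin m → Y') → Prop)
    (α : X → X') (β : Y → Y') : Prop where
  mono1 : ∀ ⦃x z : X⦄, le1 R x z → le1 R' (α x) (α z)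
  mono2 : ∀ ⦃y w : Y⦄, le2 R y w → le2 R' (β y) (β w)
  backR : ∀ ⦃x : X⦄ ⦃y : Y⦄, R' (α x) (β y) → R x y
  forthR1 : ∀ ⦃x' : X'⦄ ⦃y : Y⦄, (∀ x : X, le1 R' x' (α x) → R x y) → R' x' (β y)
  forthR2 : ∀ ⦃x : X⦄ ⦃y' : Y'⦄, (∀ y : Y, le2 R' y' (β y) → R x y) → R' (α x) y'
  backS : ∀ ⦃xs : Fin n → X⦄ ⦃y : Y⦄, S' (fun i => α (xs i)) (β y) → S xs y
  forthS : ∀ ⦃xs' : Fin n → X'⦄ ⦃y : Y⦄,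
    (∀ xs : Fin n → X, (∀ i, le1 R' (xs' i) (α (xs i))) → S xs y) → S' xs' (β y)
  backT : ∀ ⦃x : X⦄ ⦃ys : Fin m → Y⦄, T' (α x) (fun i => β (ys i)) → T x ys
  forthT : ∀ ⦃x : X⦄ ⦃ys' : Fin m → Y'⦄,
    (∀ ys : Fin m → Y, (∀ i, le2 R' (ys' i) (β (ys i))) → T x ys) → T' (α x) ys'
/-- A nonempty lattice filter: nonempty, upward closed, closed under binary meets. -/
def IsLatFilter {L : Type*} [Lattice L] (F : Set L) : Prop :=
  F.Nonempty ∧ (∀ ⦃a b : L⦄, a ∈ F → a ≤ b → b ∈ F) ∧ (∀ ⦃a b : L⦄, a ∈ F → b ∈ F → a ⊓ b ∈ F)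

/-- A nonempty lattice ideal: nonempty, downward closed, closed under binary joins. -/
def IsLatIdeal {L : Type*} [Lattice L] (D : Set L) : Prop :=
  D.Nonempty ∧ (∀ ⦃a b : L⦄, a ∈ D → b ≤ a → b ∈ D) ∧ (∀ ⦃a b : L⦄, a ∈ D → b ∈ D → a ⊔ b ∈ D)

/-- The set `𝓕_L` of nonempty filters of `L`. -/
abbrev Filt (L : Type*) [Lattice L] := {F : Set L // IsLatFilter F}

/-- The set `𝓘_L` of nonempty ideals of `L`. -/
abbrev Idl (L : Type*) [Lattice L] := {D : Set L // IsLatIdeal D}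

/-- The canonical polarity relation: `F ⋔ D` iff `F ∩ D ≠ ∅`. -/
def canR {L : Type*} [Lattice L] (F : Filt L) (D : Idl L) : Prop := (F.val ∩ D.val).Nonempty

/-- A filter `F` is `D`-maximal if it is maximal (w.r.t. inclusion) among filters
disjoint from the ideal `D`. -/
def DMaximal {L : Type*} [Lattice L] (F : Filt L) (D : Idl L) : Prop :=
  F.val ∩ D.val = ∅ ∧ ∀ F' : Filt L, F.val ⊆ F'.val → F'.val ∩ D.val = ∅ → F'.val = F.val

/-- A filter is i-maximal if it is `D`-maximal for some ideal `D`. -/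
def IMaximal {L : Type*} [Lattice L] (F : Filt L) : Prop := ∃ D : Idl L, DMaximal F D


/- A filter lies outside a stable set `B` exactly when it is disjoint from some ideal
in `ρ B`, and by Zorn's lemma it then extends to an i-maximal filter disjoint from that ideal.
Stable sets are upward closed, so each stable set is determined by the i-maximal filters it
contains, and these are all of the form `α x`. -/

section CanonicalPolarity
variable {L : Type*} [Lattice L]

lemma StableX.mem_of_subset {A : Set (Filt L)} (hA : StableX canR A) {F G : Filt L}
    (hF : F ∈ A) (hFG : F.val ⊆ G.val) : G ∈ A := by
  rw [hA] at hF ⊢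
  intro D hD
  obtain ⟨a, haF, haD⟩ := hF D hD
  exact ⟨a, hFG haF, haD⟩

lemma isLatFilter_sUnion {c : Set (Set L)} (hc : ∀ F ∈ c, IsLatFilter F) (hchain : IsChain (· ⊆ ·) c)
    (hne : c.Nonempty) : IsLatFilter (⋃₀ c) := by
  refine ⟨?_, ?_, ?_⟩
  · obtain ⟨F, hF⟩ := hne
    obtain ⟨a, ha⟩ := (hc F hF).1
    exact ⟨a, F, hF, ha⟩
  · rintro a b ⟨F, hF, ha⟩ hab
    exact ⟨F, hF, (hc F hF).2.1 ha hab⟩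
  · rintro a b ⟨F, hF, ha⟩ ⟨G, hG, hb⟩
    rcases hchain.total hF hG with hFG | hGF
    · exact ⟨G, hG, (hc G hG).2.2 (hFG ha) hb⟩
    · exact ⟨F, hF, (hc F hF).2.2 ha (hGF hb)⟩

lemma exists_dMaximal_superset {F : Filt L} {D : Idl L} (hFD : F.val ∩ D.val = ∅) :
    ∃ G : Filt L, F.val ⊆ G.val ∧ DMaximal G D := by
  let S : Set (Set L) := {G | IsLatFilter G ∧ F.val ⊆ G ∧ G ∩ D.val = ∅}
  obtain ⟨M, hFM, ⟨hM, -, hMD⟩, hMmax⟩ := by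
    refine zorn_subset_nonempty S ?_ F.val ⟨F.2, subset_rfl, hFD⟩
    intro c hcS hchain hne
    obtain ⟨G, hG⟩ := hne
    refine ⟨⋃₀ c, ⟨isLatFilter_sUnion (fun G hG => (hcS hG).1) hchain ⟨G, hG⟩,
      (hcS hG).2.1.trans (Set.subset_sUnion_of_mem hG), ?_⟩, fun _ => Set.subset_sUnion_of_mem⟩
    simpa [Set.sUnion_eq_biUnion, Set.iUnion₂_inter] using fun G hG => (hcS hG).2.2
  refine ⟨⟨M, hM⟩, hFM, hMD, fun G hMG hGD => ?_⟩
  exact (hMmax ⟨G.2, hFM.trans hMG, hGD⟩ hMG).antisymm hMG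

lemma subset_of_forall_iMaximal {A B : Set (Filt L)} (hA : StableX canR A) (hB : StableX canR B)
    (hAB : ∀ G, IMaximal G → G ∈ A → G ∈ B) : A ⊆ B := by
  intro F hF
  rw [hB]
  intro D hD
  by_contra hFD
  obtain ⟨G, hFG, hG⟩ := exists_dMaximal_superset (Set.not_nonempty_iff_eq_empty.1 hFD)
  have hGB : G ∈ B := hAB G ⟨D, hG⟩ (hA.mem_of_subset hF hFG)
  rw [hB] at hGB
  exact (hGB D hD).ne_empty hG.1

end CanonicalPolarity

theorem stmt19_general {L : Type*} [Lattice L] {X : Type*}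
    (α : X → Filt L)
    (hmax : ∀ F : Filt L, IMaximal F → F ∈ Set.range α) :
    ∀ A B : Set (Filt L), StableX (canR (L := L)) A → StableX (canR (L := L)) B →
      α ⁻¹' A = α ⁻¹' B → A = B := by
  have transfer : ∀ {A B : Set (Filt L)}, α ⁻¹' A ⊆ α ⁻¹' B → ∀ G, IMaximal G → G ∈ A → G ∈ B := by
    intro A B hAB G hG hGA
    obtain ⟨x, rfl⟩ := hmax G hG
    exact hAB hGA
  intro A B hA hB hAB
  exact (subset_of_forall_iMaximal hA hB (transfer hAB.le)).antisymm
    (subset_of_forall_iMaximal hB hA (transfer hAB.ge))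

/-- If `(α, β)` is a bounded morphism of polarities from `P = (X, Y, R)` to the canonical
polarity of `L` whose `α`-image contains every i-maximal filter, then `A ↦ α⁻¹ A` is
injective on stable subsets of `𝓕_L`. -/
theorem stmt19 {L : Type*} [Lattice L] [BoundedOrder L] {X Y : Type*}
    (R : X → Y → Prop) (α : X → Filt L) (β : Y → Idl L)
    (h : IsPolarityMorphism R (canR (L := L)) α β)
    (hmax : ∀ F : Filt L, IMaximal F → F ∈ Set.range α) :
    ∀ A B : Set (Filt L), StableX (canR (L := L)) A → StableX (canR (L := L)) B →
      α ⁻¹' A = α ⁻¹' B → A = B :=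
  stmt19_general α hmax
end
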